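/- Let G be a group such that G/D is finitely generated, where D = ⁅G,G⁆, and let D̃ be the preimage in G of the torsion subgroup of G/D. Then the natural surjective homomorphism D/⁅D,G⁆ → D/⁅D̃,G⁆ has finite kernel. -/

import Mathlib

/-!
Put `Q = G ⧸ ⁅D, G⁆`. The commutator subgroup of `Q` is central, so `(x, y) ↦ ⁅x, y⁆` is a
bimultiplicative pairing on the abelianization `Qᵃᵇ` with values in the centre of `Q`. The image
of `⁅D̃, G⁆` in `Q` therefore lies in the subgroup generated by the values of the pairing on
`T × S`, where `T` is the torsion subgroup of the finitely generated abelian group `Qᵃᵇ` (so `T`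
is finite) and `S` is a finite generating set of `Qᵃᵇ`. These values are torsion, so they generate
a finitely generated torsion abelian group, which is finite. Since `⁅D, G⁆ ≤ D`, the kernel
`⁅D̃, G⁆ / ⁅D, G⁆` of the natural surjection embeds into `Q` as the image of `⁅D̃, G⁆`.
-/

open Subgroup commutatorElement

theorem CommGroup.subgroup_fg {A : Type*} [CommGroup A] [Group.FG A] (H : Subgroup A) : H.FG := by
  have : Module.Finite ℤ (Additive A) := Module.Finite.iff_addGroup_fg.mpr inferInstance
  have := IsNoetherian.noetherian H.toAddSubgroup.toIntSubmodule
  rw [Submodule.fg_iff_addSubgroup_fg, AddSubgroup.toIntSubmodule_toAddSubgroup] at this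
  exact (Subgroup.fg_iff_add_fg _).mpr this

theorem CommGroup.finite_torsion_of_fg {A : Type*} [CommGroup A] [Group.FG A] :
    Finite (torsion A) :=
  have : Group.FG (torsion A) := (Group.fg_iff_subgroup_fg _).mpr (subgroup_fg _)
  finite_of_fg_isMulTorsion _ fun x => Submonoid.isOfFinOrder_coe.mp x.2

open IsMulCommutative in
theorem Subgroup.finite_closure_of_isOfFinOrder {M : Type*} [Group M] [IsMulCommutative M]
    {s : Set M} (hs : s.Finite) (h : ∀ x ∈ s, IsOfFinOrder x) : Finite (closure s) :=
  have : Finite s := hs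
  CommGroup.finite_of_fg_isMulTorsion _ fun x =>
    Submonoid.isOfFinOrder_coe.mp ((closure_le (CommGroup.torsion M)).mpr h x.2)

section ClassTwo

variable {Q : Type*} [Group Q]

theorem commutatorElement_mem_center_of_le_center (hQ : commutator Q ≤ center Q) (x y : Q) :
    ⁅x, y⁆ ∈ center Q :=
  hQ (commutator_mem_commutator (mem_top x) (mem_top y))

theorem commutatorElement_mul_right_of_le_center (hQ : commutator Q ≤ center Q) (x y z : Q) :
    ⁅x, y * z⁆ = ⁅x, y⁆ * ⁅x, z⁆ := by
  rw [commutatorElement_mul_right_eq_mul_conj, mul_assoc _ y,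
    mem_center_iff.mp (commutatorElement_mem_center_of_le_center hQ x z) y, ← mul_assoc,
    mul_inv_cancel_right]

theorem commutatorElement_mul_left_of_le_center (hQ : commutator Q ≤ center Q) (x y z : Q) :
    ⁅x * y, z⁆ = ⁅x, z⁆ * ⁅y, z⁆ := by
  have hyz := commutatorElement_mem_center_of_le_center hQ y z
  rw [commutatorElement_mul_left_eq_conj_mul, mem_center_iff.mp hyz x, mul_inv_cancel_right,
    mem_center_iff.mp hyz]

open IsMulCommutative in
def commutatorPairing (hQ : commutator Q ≤ center Q) :
    Abelianization Q →* Abelianization Q →* center Q :=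
  Abelianization.lift
    { toFun := fun x => Abelianization.lift
        { toFun := fun y => ⟨⁅x, y⁆, commutatorElement_mem_center_of_le_center hQ x y⟩
          map_one' := Subtype.ext (commutatorElement_one_right x)
          map_mul' := fun y z => Subtype.ext (commutatorElement_mul_right_of_le_center hQ x y z) }
      map_one' := Abelianization.hom_ext _ _ <| MonoidHom.ext fun y =>
        Subtype.ext (commutatorElement_one_left y)
      map_mul' := fun x x' => Abelianization.hom_ext _ _ <| MonoidHom.ext fun y =>
        Subtype.ext (commutatorElement_mul_left_of_le_center hQ x x' y) }

theorem commutatorPairing_of (hQ : commutator Q ≤ center Q) (x y : Q) :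
    (commutatorPairing hQ (.of x) (.of y) : Q) = ⁅x, y⁆ := rfl

open IsMulCommutative in
theorem finite_commutator_comap_torsion_top (hQ : commutator Q ≤ center Q)
    [Group.FG (Abelianization Q)] :
    Finite (⁅(CommGroup.torsion (Abelianization Q)).comap Abelianization.of, ⊤⁆ : Subgroup Q) := by
  obtain ⟨S, hS, hSfin⟩ := Group.fg_iff.mp ‹Group.FG (Abelianization Q)›
  have := CommGroup.finite_torsion_of_fg (A := Abelianization Q)
  set F : Set (center Q) :=
    (fun p => commutatorPairing hQ p.1 p.2) '' (CommGroup.torsion (Abelianization Q) ×ˢ S)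
  have hF : Finite (closure F) := by
    refine finite_closure_of_isOfFinOrder (((Set.toFinite _).prod hSfin).image _) ?_
    rintro _ ⟨⟨t, s⟩, ⟨ht, -⟩, rfl⟩
    exact ((commutatorPairing hQ).flip s).isOfFinOrder ht
  have hle : ⁅(CommGroup.torsion (Abelianization Q)).comap Abelianization.of, (⊤ : Subgroup Q)⁆ ≤
      (closure F).map (center Q).subtype := by
    refine commutator_le.mpr fun h ht g _ => ?_
    have hgen : commutatorPairing hQ (.of h) '' S ⊆ F := by
      rintro _ ⟨s, hs, rfl⟩
      exact ⟨(.of h, s), ⟨ht, hs⟩, rfl⟩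
    have hmem : commutatorPairing hQ (.of h) (.of g) ∈ closure F := by
      refine closure_mono hgen ?_
      rw [← MonoidHom.map_closure, hS]
      exact mem_map_of_mem _ (mem_top _)
    exact mem_map_of_mem (center Q).subtype hmem
  have : Finite ((closure F).map (center Q).subtype) :=
    Finite.of_equiv _ (equivMapOfInjective _ _ Subtype.coe_injective).toEquiv
  exact Finite.of_injective _ (inclusion_injective hle)

end ClassTwo

theorem Abelianization.map_surjective {G H : Type*} [Group G] [Group H] {f : G →* H}
    (hf : Function.Surjective f) : Function.Surjective (Abelianization.map f) := by
  intro y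
  obtain ⟨y, rfl⟩ := QuotientGroup.mk_surjective y
  obtain ⟨x, rfl⟩ := hf y
  exact ⟨.of x, map_of f x⟩

theorem Abelianization.map_comap_torsion_le {G H : Type*} [Group G] [Group H] (f : G →* H) :
    ((CommGroup.torsion (Abelianization G)).comap of).map f ≤
      (CommGroup.torsion (Abelianization H)).comap of := by
  rw [map_le_iff_le_comap]
  intro x hx
  change IsOfFinOrder (of (f x))
  rw [← map_of]
  exact (map f).isOfFinOrder hx

theorem Abelianization.commutator_le_comap_torsion (G : Type*) [Group G] :
    commutator G ≤ (CommGroup.torsion (Abelianization G)).comap of := by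
  rw [← ker_of]
  exact MonoidHom.ker_le_comap _ _

theorem commutator_quotient_le_center (G : Type*) [Group G] :
    commutator (G ⧸ ⁅commutator G, (⊤ : Subgroup G)⁆) ≤ center _ := by
  set K := ⁅commutator G, (⊤ : Subgroup G)⁆
  have hmap : commutator (G ⧸ K) = (commutator G).map (QuotientGroup.mk' K) := by
    show _ = (⁅⊤, ⊤⁆ : Subgroup G).map _
    rw [map_commutator, map_top_of_surjective _ (QuotientGroup.mk'_surjective K)]
    rfl
  rw [hmap, map_le_iff_le_comap, ← Subgroup.upperCentralSeriesStep_eq_comap_center]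
  exact fun x hx y => commutator_mem_commutator hx (mem_top y)

theorem finite_ker_map_id_subgroupOf {G : Type*} [Group G] {H K N : Subgroup G} [K.Normal]
    [N.Normal] (hKN : K ≤ N) [Finite (N.map (QuotientGroup.mk' K))] :
    Finite (QuotientGroup.map (K.subgroupOf H) (N.subgroupOf H) (MonoidHom.id H)
      ((subgroupOf_mono H hKN).trans (comap_id _).ge)).ker := by
  let ι : H ⧸ K.subgroupOf H →* G ⧸ K := QuotientGroup.map _ _ H.subtype le_rfl
  have hι : Function.Injective ι := by
    rw [← MonoidHom.ker_eq_bot_iff]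
    exact (QuotientGroup.ker_map _ _ _ _).trans (QuotientGroup.map_mk'_self _)
  have hιmk : ι.comp (QuotientGroup.mk' _) = (QuotientGroup.mk' K).comp H.subtype := rfl
  have hle : ((N.subgroupOf H).map (QuotientGroup.mk' _)).map ι ≤ N.map (QuotientGroup.mk' K) := by
    rw [map_map, hιmk, ← map_map, subgroupOf_map_subtype]
    exact map_mono inf_le_left
  rw [QuotientGroup.ker_map, comap_id]
  have := Finite.of_injective _ (inclusion_injective hle)
  exact Finite.of_equiv _ (equivMapOfInjective _ _ hι).symm.toEquiv

/-- Let `G` be a group with finitely generated abelianization `G/D`, `D = ⁅G,G⁆`, and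
`D̃` the preimage in `G` of the torsion subgroup of `G/D`. The natural surjective
homomorphism `D/⁅D,G⁆ → D/⁅D̃,G⁆` has finite kernel. -/
theorem natural_surjection_finite_kernel (G : Type*) [Group G]
    (hfg : Group.FG (Abelianization G)) :
    ∃ f : (commutator G ⧸
          ((⁅commutator G, (⊤ : Subgroup G)⁆ : Subgroup G).subgroupOf (commutator G))) →*
        (commutator G ⧸
          ((⁅(CommGroup.torsion (Abelianization G)).comap Abelianization.of,
              (⊤ : Subgroup G)⁆ : Subgroup G).subgroupOf (commutator G))),
      Function.Surjective f ∧
      (∀ x : commutator G, f (QuotientGroup.mk x) = QuotientGroup.mk x) ∧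
      Finite f.ker := by
  set K := ⁅commutator G, (⊤ : Subgroup G)⁆
  have hKN : K ≤ ⁅(CommGroup.torsion (Abelianization G)).comap Abelianization.of, ⊤⁆ :=
    commutator_mono (Abelianization.commutator_le_comap_torsion G) le_rfl
  have : Group.FG (Abelianization (G ⧸ K)) :=
    Group.fg_of_surjective (Abelianization.map_surjective (QuotientGroup.mk'_surjective K))
  have := finite_commutator_comap_torsion_top (commutator_quotient_le_center G)
  have : Finite (Subgroup.map (QuotientGroup.mk' K)
      ⁅(CommGroup.torsion (Abelianization G)).comap Abelianization.of, ⊤⁆) := by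
    rw [map_commutator, map_top_of_surjective _ (QuotientGroup.mk'_surjective K)]
    exact Finite.of_injective _
      (inclusion_injective (commutator_mono (Abelianization.map_comap_torsion_le _) le_rfl))
  exact ⟨_, QuotientGroup.map_surjective_of_surjective _ _ (MonoidHom.id _)
      QuotientGroup.mk_surjective ((subgroupOf_mono _ hKN).trans (comap_id _).ge),
    fun _ => rfl, finite_ker_map_id_subgroupOf hKN⟩
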